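/- (Composition–Diamond lemma for associative algebras; the case Ω = ∅.) Let K be a commutative ring with unit, X a well-ordered set, and order the free semigroup S(X) by the deg-lex ordering (compare words first by length, then lexicographically). Let K⟨X⟩ be the free K-module with basis S(X) with concatenation product (the free nonunital associative K-algebra on X), and let S ⊆ K⟨X⟩ be a set of monic polynomials. Then the following are equivalent: (I) S is a Gröbner–Shirshov basis, i.e., every intersection composition (f,g)_w = fa − bg (where w = f̄a = bḡ with |w| < |f̄| + |ḡ|) and every inclusion composition (f,g)_w = f − aḡb replaced by f − agb (where w = f̄ = aḡb for words a, b possibly empty) can be written as Σᵢ αᵢ aᵢsᵢbᵢ with sᵢ ∈ S and aᵢs̄ᵢbᵢ < w; (II) for every nonzero f in the two-sided ideal Id(S) generated by S, the leading word f̄ contains some s̄ (s ∈ S) as a subword; (III) the set Irr(S) of words in S(X) containing no s̄ (s ∈ S) as a subword is a K-basis of K⟨X⟩/Id(S). -/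

import Mathlib

/-! The Composition–Diamond lemma for associative algebras: the case `Ω = ∅`.
`K⟨X⟩` is the free nonunital associative `K`-algebra with `K`-basis the free
semigroup `S(X)`, realized as `MonoidAlgebra K (FreeSemigroup X)`. -/

universe u w

variable {X : Type u}

/-- The list of letters of a word of the free semigroup `S(X)`. -/
def FreeSemigroup.toL (u : FreeSemigroup X) : List X := u.head :: u.tail

/-- The length `|u|` of a word. -/
def FreeSemigroup.len (u : FreeSemigroup X) : ℕ := u.toL.length

/-- The deg-lex ordering on `S(X)`: compare two words first by their lengths and then
lexicographically. `DegLex u v` means `u < v`. -/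
def DegLexW [LinearOrder X] (u v : FreeSemigroup X) : Prop :=
  u.len < v.len ∨ (u.len = v.len ∧ List.Lex (· < ·) u.toL v.toL)

/-- `a u b`: the word `u` multiplied by the possibly empty words `a` (on the left)
and `b` (on the right). -/
def wrapW (a b : List X) (u : FreeSemigroup X) : FreeSemigroup X :=
  match a with
  | [] => ⟨u.head, u.tail ++ b⟩
  | x :: xs => ⟨x, xs ++ u.toL ++ b⟩

section Algebra

variable (K : Type w) [CommRing K]

/-- The free nonunital associative `K`-algebra `K⟨X⟩` on `X`. -/
abbrev FreeNA (X : Type u) := MonoidAlgebra K (FreeSemigroup X)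

variable {K}

/-- `a g b` for a polynomial `g ∈ K⟨X⟩` and possibly empty words `a, b ∈ X*`. -/
noncomputable def wrapPoly (a b : List X) (g : FreeNA K X) : FreeNA K X :=
  g.coeff.sum fun w c => MonoidAlgebra.single (wrapW a b w) c

variable [LinearOrder X]

/-- `w` is the leading word `f̄` of `f` under the deg-lex ordering. -/
def HasLead (f : FreeNA K X) (w : FreeSemigroup X) : Prop :=
  w ∈ f.coeff.support ∧ ∀ v ∈ f.coeff.support, v ≠ w → DegLexW v w

/-- `f` is monic with leading word `w`. -/
def MonicAt (f : FreeNA K X) (w : FreeSemigroup X) : Prop :=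
  HasLead f w ∧ f.coeff w = 1

/-- The two-sided ideal `Id(S)` generated by `S` in `K⟨X⟩`: the `K`-span of all
`a s b` with `s ∈ S` and `a, b` possibly empty words. -/
noncomputable def IdS (S : Set (FreeNA K X)) : Submodule K (FreeNA K X) :=
  Submodule.span K {q | ∃ a b s, s ∈ S ∧ q = wrapPoly a b s}

/-- `p ≡ 0 mod (S, w)`: `p = Σᵢ αᵢ aᵢ sᵢ bᵢ` with `sᵢ ∈ S` and `aᵢ s̄ᵢ bᵢ < w`. -/
def TrivialMod (S : Set (FreeNA K X)) (w : FreeSemigroup X) (p : FreeNA K X) : Prop :=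
  p ∈ Submodule.span K
    {q | ∃ a b s ws, s ∈ S ∧ HasLead s ws ∧ DegLexW (wrapW a b ws) w ∧ q = wrapPoly a b s}

/-- `S` is a Gröbner–Shirshov basis in `K⟨X⟩`: `S` consists of monic polynomials and
every intersection composition `(f,g)_w = fa - bg` (where `w = f̄a = bḡ` with
`|w| < |f̄| + |ḡ|`) and every inclusion composition `(f,g)_w = f - agb` (where
`w = f̄ = aḡb`, `a, b` possibly empty) is trivial modulo `(S, w)`. -/
def IsGSB (S : Set (FreeNA K X)) : Prop :=
  (∀ s ∈ S, ∃ w, MonicAt s w) ∧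
  (∀ f ∈ S, ∀ g ∈ S, ∀ wf wg a b : FreeSemigroup X,
    HasLead f wf → HasLead g wg → wf * a = b * wg →
    (wf * a).len < wf.len + wg.len →
    TrivialMod S (wf * a) (f * MonoidAlgebra.single a 1 - MonoidAlgebra.single b 1 * g)) ∧
  (∀ f ∈ S, ∀ g ∈ S, ∀ wf wg : FreeSemigroup X, ∀ a b : List X,
    HasLead f wf → HasLead g wg → wf = wrapW a b wg →
    TrivialMod S wf (f - wrapPoly a b g))

/-- Condition (II): the leading word of every nonzero `f ∈ Id(S)` contains some `s̄`
(`s ∈ S`) as a subword. -/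
def CDTwo (S : Set (FreeNA K X)) : Prop :=
  ∀ f : FreeNA K X, f ∈ IdS S → f ≠ 0 →
    ∃ (a b : List X) (s : FreeNA K X) (ws : FreeSemigroup X),
      s ∈ S ∧ HasLead s ws ∧ HasLead f (wrapW a b ws)

/-- `Irr(S)`: the words of `S(X)` containing no `s̄` (`s ∈ S`) as a subword. -/
def IrrSet (S : Set (FreeNA K X)) : Set (FreeSemigroup X) :=
  {w | ¬ ∃ a b s ws, s ∈ S ∧ HasLead s ws ∧ w = wrapW a b ws}

/-- Condition (III): the images of the elements of `Irr(S)` form a `K`-basis of the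
quotient `K⟨X⟩ / Id(S)`. -/
def CDThree (S : Set (FreeNA K X)) : Prop :=
  LinearIndependent K (fun w : IrrSet S =>
    (Submodule.Quotient.mk (MonoidAlgebra.single w.1 (1 : K)) : FreeNA K X ⧸ IdS S)) ∧
  Submodule.span K (Set.range (fun w : IrrSet S =>
    (Submodule.Quotient.mk (MonoidAlgebra.single w.1 (1 : K)) : FreeNA K X ⧸ IdS S))) = ⊤

/-!
For `(II) ⇒ (I)`: a composition lies in `Id(S)` and all its words are below `w`; by (II) its
leading word has the form `a s̄ b`, and subtracting a multiple of `a s b` lowers it, so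
well-founded induction writes it as a combination of `a s b` with `a s̄ b < w`.

For `(I) ⇒ (II)` the key fact is that two occurrences `a₁ s̄₁ b₁ = a₂ s̄₂ b₂ = w` give a
difference `a₁ s₁ b₁ - a₂ s₂ b₂` that is trivial modulo `(S, w)`: if the occurrences of `s̄₁`
and `s̄₂` in `w` overlap, it is a wrapped intersection or inclusion composition; if they are
disjoint, it is an explicit combination of terms below `w`. Hence an element of `Id(S)` that is a
combination of `a s b` with `a s̄ b ≤ w` is, modulo such terms below `w`, a multiple of one
`a s b` with `a s̄ b = w`: either its leading word is `w` or it is a combination below `w`, and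
well-founded induction on `w` concludes.

For `(II) ⇔ (III)`: reducing leading words shows that `Irr(S)` always spans `K⟨X⟩ / Id(S)`, and
`Irr(S)` is independent there iff no nonzero polynomial supported on `Irr(S)` lies in `Id(S)`,
which by the same reduction is equivalent to (II).
-/

section Words

variable {α : Type*}

theorem FreeSemigroup.toL_injective : Function.Injective (FreeSemigroup.toL (X := α)) := by
  rintro ⟨x, xs⟩ ⟨y, ys⟩ h
  simp_all [FreeSemigroup.toL]

theorem FreeSemigroup.toL_mul (u v : FreeSemigroup α) :
    (u * v).toL = u.toL ++ v.toL := rfl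

theorem FreeSemigroup.len_mul (u v : FreeSemigroup α) :
    (u * v).len = u.len + v.len := by
  simp [FreeSemigroup.len, FreeSemigroup.toL_mul]

theorem FreeSemigroup.len_pos (u : FreeSemigroup α) : 0 < u.len := by
  simp [FreeSemigroup.len, FreeSemigroup.toL]

theorem FreeSemigroup.exists_toL_eq :
    ∀ {l : List α}, l ≠ [] → ∃ u : FreeSemigroup α, u.toL = l
  | x :: xs, _ => ⟨⟨x, xs⟩, rfl⟩

theorem toL_wrapW (a b : List α) (u : FreeSemigroup α) :
    (wrapW a b u).toL = a ++ u.toL ++ b := by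
  cases a <;> simp [wrapW, FreeSemigroup.toL]

theorem wrapW_eq_iff {a b a' b' : List α} {u u' : FreeSemigroup α} :
    wrapW a b u = wrapW a' b' u' ↔ a ++ u.toL ++ b = a' ++ u'.toL ++ b' := by
  rw [← toL_wrapW, ← toL_wrapW, FreeSemigroup.toL_injective.eq_iff]

theorem eq_wrapW_iff {a b : List α} {u v : FreeSemigroup α} :
    u = wrapW a b v ↔ u.toL = a ++ v.toL ++ b := by
  rw [← toL_wrapW, FreeSemigroup.toL_injective.eq_iff]

theorem wrapW_injective (a b : List α) : Function.Injective (wrapW a b) := by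
  intro u v h
  rw [wrapW_eq_iff] at h
  exact FreeSemigroup.toL_injective (List.append_cancel_left (List.append_cancel_right h))

theorem wrapW_wrapW (a b a' b' : List α) (u : FreeSemigroup α) :
    wrapW a b (wrapW a' b' u) = wrapW (a ++ a') (b' ++ b) u := by
  apply FreeSemigroup.toL_injective
  simp [toL_wrapW]

theorem wrapW_nil_nil (u : FreeSemigroup α) : wrapW [] [] u = u := by
  apply FreeSemigroup.toL_injective
  simp [toL_wrapW]

theorem wrapW_nil_left (u v : FreeSemigroup α) : wrapW [] v.toL u = u * v := by
  apply FreeSemigroup.toL_injective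
  simp [toL_wrapW, FreeSemigroup.toL_mul]

theorem wrapW_nil_right (u v : FreeSemigroup α) : wrapW u.toL [] v = u * v := by
  apply FreeSemigroup.toL_injective
  simp [toL_wrapW, FreeSemigroup.toL_mul]

theorem List.Shortlex.append_right_of_shortlex {r : α → α → Prop} {s t : List α}
    (h : List.Shortlex r s t) (u : List α) : List.Shortlex r (s ++ u) (t ++ u) := by
  rcases List.shortlex_def.mp h with hlt | ⟨hlen, hlex⟩
  · exact .of_length_lt (by simpa using hlt)
  · refine .of_lex (by simp [hlen]) ?_
    clear h
    induction hlex with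
    | nil => simp at hlen
    | cons _ ih => exact .cons (ih (by simpa using hlen))
    | rel h => exact .rel h

theorem degLexEmbedding_injective :
    Function.Injective fun u : FreeSemigroup α => toLex (u.len, u.toL) :=
  fun _ _ h => FreeSemigroup.toL_injective (congrArg (fun p => (ofLex p).2) h)

section DegLex

variable [LinearOrder α]

noncomputable instance : LinearOrder (FreeSemigroup α) :=
  LinearOrder.lift' _ degLexEmbedding_injective

theorem FreeSemigroup.lt_iff_degLexW {u v : FreeSemigroup α} : u < v ↔ DegLexW u v :=
  Prod.Lex.lt_iff

theorem FreeSemigroup.lt_iff_shortlex {u v : FreeSemigroup α} :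
    u < v ↔ List.Shortlex (· < ·) u.toL v.toL :=
  FreeSemigroup.lt_iff_degLexW.trans List.shortlex_def.symm

instance [WellFoundedLT α] : WellFoundedLT (FreeSemigroup α) :=
  ⟨(InvImage.wf FreeSemigroup.toL (List.Shortlex.wf wellFounded_lt)).mono
    fun _ _ => FreeSemigroup.lt_iff_shortlex.mp⟩

theorem wrapW_strictMono (a b : List α) : StrictMono (wrapW a b) := by
  intro u v h
  rw [FreeSemigroup.lt_iff_shortlex, toL_wrapW, toL_wrapW]
  exact ((FreeSemigroup.lt_iff_shortlex.mp h).append_left a).append_right_of_shortlex b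

end DegLex

end Words

section Polynomials

open MonoidAlgebra

section MonoidAlgebraBasis

variable {R G : Type*}

theorem MonoidAlgebra.single_mem_supported [Semiring R] {s : Set G} {v : G} (c : R)
    (hv : v ∈ s) : single v c ∈ supported R R s :=
  mem_supported.mpr fun u hu => by
    rw [Finset.mem_coe, coeff_single] at hu
    rwa [Finset.mem_singleton.mp (Finsupp.support_single_subset hu)]

theorem map_mem_of_mem_supported {M : Type*} [Semiring R] [AddCommMonoid M] [Module R M]
    {T : Set G} {N : Submodule R M} (L : MonoidAlgebra R G →ₗ[R] M)
    (h : ∀ v ∈ T, L (single v 1) ∈ N) {r : MonoidAlgebra R G} (hr : r ∈ supported R R T) :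
    L r ∈ N := by
  rw [supported_eq_span_single] at hr
  refine (Submodule.span_le (p := N.comap L)).mpr ?_ hr
  rintro _ ⟨v, hv, rfl⟩
  exact h v hv

theorem linearIndependent_mk_single_iff [Ring R] (T : Set G)
    (N : Submodule R (MonoidAlgebra R G)) :
    LinearIndependent R (fun w : T => (Submodule.Quotient.mk (single w.1 (1 : R)) :
      MonoidAlgebra R G ⧸ N)) ↔ Disjoint (supported R R T) N := by
  have hspan : Submodule.span R (Set.range fun w : T => single w.1 (1 : R)) =
      supported R R T := by
    rw [supported_eq_span_single, Set.image_eq_range]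
  have hli : LinearIndependent R fun w : T => single w.1 (1 : R) := by
    have := (MonoidAlgebra.basis G R).linearIndependent.comp (Subtype.val : T → G)
      Subtype.val_injective
    simpa only [Function.comp_def, basis_apply] using this
  constructor
  · intro h
    simpa [hspan] using Submodule.range_ker_disjoint (f := N.mkQ) h
  · intro h
    exact (N.mkQ.linearIndependent_iff_of_disjoint (by rwa [hspan, Submodule.ker_mkQ])).mpr hli

theorem span_range_mk_single_eq_top_iff [Ring R] (T : Set G)
    (N : Submodule R (MonoidAlgebra R G)) :
    Submodule.span R (Set.range fun w : T => (Submodule.Quotient.mk (single w.1 (1 : R)) :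
      MonoidAlgebra R G ⧸ N)) = ⊤ ↔ N ⊔ supported R R T = ⊤ := by
  rw [← Submodule.map_mkQ_eq_top, supported_eq_span_single, Submodule.map_span,
    Set.image_image, Set.image_eq_range]
  rfl

end MonoidAlgebraBasis

theorem Submodule.exists_mem_span_le_of_mem_span {R M ι : Type*} [Semiring R] [AddCommMonoid M]
    [Module R M] [LinearOrder ι] {s : Set M} (φ : M → ι) {x : M} (hx : x ∈ Submodule.span R s)
    (hx0 : x ≠ 0) : ∃ m ∈ s, x ∈ Submodule.span R {y ∈ s | φ y ≤ φ m} := by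
  obtain ⟨T, hTs, hxT⟩ := Submodule.mem_span_finite_of_mem_span hx
  rcases T.eq_empty_or_nonempty with rfl | hT
  · simp_all
  obtain ⟨m, hm, hmax⟩ := T.exists_max_image φ hT
  exact ⟨m, hTs hm, Submodule.span_mono (fun y hy => Set.mem_sep (hTs hy) (hmax y hy)) hxT⟩

section WrapPoly

variable {α : Type*}

theorem wrapPoly_eq_mapDomainLinearMap (a b : List α) (g : FreeNA K α) :
    wrapPoly a b g = mapDomainLinearMap K K (wrapW a b) g := by
  ext1
  simp [wrapPoly, coeff_finsuppSum, Finsupp.mapDomain]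

theorem wrapPoly_sub (a b : List α) (g h : FreeNA K α) :
    wrapPoly a b (g - h) = wrapPoly a b g - wrapPoly a b h := by
  simp only [wrapPoly_eq_mapDomainLinearMap, map_sub]

theorem wrapPoly_single (a b : List α) (u : FreeSemigroup α) (c : K) :
    wrapPoly a b (single u c) = single (wrapW a b u) c := by
  rw [wrapPoly_eq_mapDomainLinearMap, mapDomainLinearMap_single]

theorem coeff_wrapPoly_wrapW (a b : List α) (g : FreeNA K α) (u : FreeSemigroup α) :
    (wrapPoly a b g).coeff (wrapW a b u) = g.coeff u := by
  rw [wrapPoly_eq_mapDomainLinearMap, coeff_mapDomainLinearMap,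
    Finsupp.mapDomain_apply (wrapW_injective a b)]

theorem wrapPoly_wrapPoly (a b a' b' : List α) (g : FreeNA K α) :
    wrapPoly a b (wrapPoly a' b' g) = wrapPoly (a ++ a') (b' ++ b) g := by
  simp only [wrapPoly_eq_mapDomainLinearMap, ← LinearMap.comp_apply,
    ← mapDomainLinearMap_comp]
  congr 2
  exact funext (wrapW_wrapW a b a' b')

theorem wrapPoly_nil_nil (g : FreeNA K α) : wrapPoly [] [] g = g := by
  rw [wrapPoly_eq_mapDomainLinearMap, funext wrapW_nil_nil]
  exact congrArg ofCoeff Finsupp.mapDomain_id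

theorem mul_single_one_eq_wrapPoly (g : FreeNA K α) (u : FreeSemigroup α) :
    g * single u 1 = wrapPoly [] u.toL g := by
  induction g using induction_linear with
  | zero => simp [wrapPoly_eq_mapDomainLinearMap]
  | add f g hf hg => simp only [add_mul, hf, hg, wrapPoly_eq_mapDomainLinearMap, map_add]
  | single v c => rw [single_mul_single, wrapPoly_single, mul_one, wrapW_nil_left]

theorem single_one_mul_eq_wrapPoly (g : FreeNA K α) (u : FreeSemigroup α) :
    single u 1 * g = wrapPoly u.toL [] g := by
  induction g using induction_linear with
  | zero => simp [wrapPoly_eq_mapDomainLinearMap]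
  | add f g hf hg => simp only [mul_add, hf, hg, wrapPoly_eq_mapDomainLinearMap, map_add]
  | single v c => rw [single_mul_single, wrapPoly_single, one_mul, wrapW_nil_right]

theorem wrapPoly_mem_supported {a b : List α} {g : FreeNA K α} {s : Set (FreeSemigroup α)}
    (hg : g ∈ supported K K s) : wrapPoly a b g ∈ supported K K (wrapW a b '' s) := by
  classical
  rw [mem_supported, wrapPoly_eq_mapDomainLinearMap, coeff_mapDomainLinearMap]
  refine (Finset.coe_subset.mpr Finsupp.mapDomain_support).trans ?_
  rw [Finset.coe_image]
  exact Set.image_mono (mem_supported.mp hg)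

theorem wrapPoly_mem_idS {S : Set (FreeNA K α)} (a b : List α) {s : FreeNA K α} (hs : s ∈ S) :
    wrapPoly a b s ∈ IdS S :=
  Submodule.subset_span ⟨a, b, s, hs, rfl⟩

theorem subset_idS {S : Set (FreeNA K α)} : S ⊆ IdS S := fun s hs => by
  simpa [wrapPoly_nil_nil] using wrapPoly_mem_idS [] [] hs

end WrapPoly

theorem hasLead_iff {f : FreeNA K X} {w : FreeSemigroup X} :
    HasLead f w ↔ w ∈ f.coeff.support ∧ f ∈ supported K K (Set.Iic w) := by
  rw [HasLead, mem_supported]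
  refine and_congr_right fun _ => ⟨fun h v hv => ?_, fun h v hv hne => ?_⟩
  · rcases eq_or_ne v w with rfl | hne
    · exact Set.mem_Iic.mpr le_rfl
    · exact (FreeSemigroup.lt_iff_degLexW.mpr (h v hv hne)).le
  · exact FreeSemigroup.lt_iff_degLexW.mp ((h hv).lt_of_ne hne)

theorem HasLead.mem_supported {f : FreeNA K X} {w : FreeSemigroup X} (h : HasLead f w) :
    f ∈ supported K K (Set.Iic w) :=
  (hasLead_iff.mp h).2

theorem HasLead.eq {f : FreeNA K X} {w w' : FreeSemigroup X} (h : HasLead f w)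
    (h' : HasLead f w') : w = w' := by
  rw [hasLead_iff, MonoidAlgebra.mem_supported] at h h'
  exact le_antisymm (h'.2 h.1) (h.2 h'.1)

theorem HasLead.max_eq {f : FreeNA K X} {w : FreeSemigroup X} (h : HasLead f w) :
    f.coeff.support.max = w :=
  le_antisymm (Finset.max_le fun _ hv => WithBot.coe_le_coe.mpr (h.mem_supported hv))
    (Finset.le_max h.1)

theorem exists_hasLead {f : FreeNA K X} (hf : f ≠ 0) : ∃ w, HasLead f w := by
  have hs : f.coeff.support.Nonempty := by simpa [Finsupp.support_nonempty_iff] using hf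
  exact ⟨_, hasLead_iff.mpr ⟨Finset.max'_mem _ hs, fun v hv => Finset.le_max' _ v hv⟩⟩

theorem HasLead.add {f g : FreeNA K X} {w : FreeSemigroup X} (hf : HasLead f w)
    (hg : g ∈ supported K K (Set.Iio w)) : HasLead (f + g) w := by
  rw [hasLead_iff] at hf ⊢
  have hgw : g.coeff w = 0 := (mem_supported'.mp hg) w (lt_irrefl w)
  refine ⟨by simpa [coeff_add, hgw] using hf.1, add_mem hf.2 ?_⟩
  exact supported_mono Set.Iio_subset_Iic_self hg

theorem MonicAt.hasLead_smul {g : FreeNA K X} {w : FreeSemigroup X} (hg : MonicAt g w)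
    {c : K} (hc : c ≠ 0) : HasLead (c • g) w := by
  have hlead := hasLead_iff.mp hg.1
  rw [hasLead_iff]
  exact ⟨by simpa [coeff_smul, hg.2] using hc, Submodule.smul_mem _ c hlead.2⟩

theorem HasLead.wrapPoly {g : FreeNA K X} {w : FreeSemigroup X} (hg : HasLead g w)
    (a b : List X) : HasLead (wrapPoly a b g) (wrapW a b w) := by
  rw [hasLead_iff] at hg ⊢
  refine ⟨by simpa [coeff_wrapPoly_wrapW] using hg.1, ?_⟩
  refine supported_mono ?_ (wrapPoly_mem_supported hg.2)
  rintro _ ⟨u, hu, rfl⟩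
  exact (wrapW_strictMono a b).monotone hu

theorem MonicAt.wrapPoly {g : FreeNA K X} {w : FreeSemigroup X} (hg : MonicAt g w)
    (a b : List X) : MonicAt (wrapPoly a b g) (wrapW a b w) :=
  ⟨hg.1.wrapPoly a b, by rw [coeff_wrapPoly_wrapW, hg.2]⟩

theorem sub_smul_mem_supported_Iio {f g : FreeNA K X} {w : FreeSemigroup X}
    (hf : f ∈ supported K K (Set.Iic w)) (hg : g ∈ supported K K (Set.Iic w))
    (hgw : g.coeff w = 1) : f - f.coeff w • g ∈ supported K K (Set.Iio w) := by
  rw [mem_supported'] at hf hg ⊢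
  intro v hv
  rcases (not_lt.mp (Set.mem_Iio.not.mp hv)).eq_or_lt with rfl | hlt
  · simp [coeff_sub, coeff_smul, hgw]
  · simp [coeff_sub, coeff_smul, hf v (not_le.mpr hlt), hg v (not_le.mpr hlt)]

theorem monicAt_of_hasLead {S : Set (FreeNA K X)} (hmonic : ∀ s ∈ S, ∃ w, MonicAt s w)
    {s : FreeNA K X} {w : FreeSemigroup X} (hs : s ∈ S) (h : HasLead s w) : MonicAt s w := by
  obtain ⟨w', hw'⟩ := hmonic s hs
  rwa [h.eq hw'.1]

theorem MonicAt.sub_single_mem_supported_Iio {g : FreeNA K X} {w : FreeSemigroup X}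
    (hg : MonicAt g w) : g - single w 1 ∈ supported K K (Set.Iio w) := by
  simpa [hg.2] using sub_smul_mem_supported_Iio hg.1.mem_supported
    (single_mem_supported 1 (Set.mem_Iic.mpr le_rfl)) (by simp [coeff_single])

noncomputable def genSpan (S : Set (FreeNA K X)) (P : FreeSemigroup X → Prop) :
    Submodule K (FreeNA K X) :=
  Submodule.span K {q | ∃ a b s ws, s ∈ S ∧ HasLead s ws ∧ P (wrapW a b ws) ∧ q = wrapPoly a b s}

section GenSpan

variable {S : Set (FreeNA K X)}

theorem trivialMod_iff {w : FreeSemigroup X} {p : FreeNA K X} :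
    TrivialMod S w p ↔ p ∈ genSpan S (· < w) := by
  simp only [TrivialMod, genSpan, FreeSemigroup.lt_iff_degLexW]

theorem wrapPoly_mem_genSpan {P : FreeSemigroup X → Prop} {a b : List X} {s : FreeNA K X}
    {ws : FreeSemigroup X} (hs : s ∈ S) (hws : HasLead s ws) (hP : P (wrapW a b ws)) :
    wrapPoly a b s ∈ genSpan S P :=
  Submodule.subset_span ⟨a, b, s, ws, hs, hws, hP, rfl⟩

theorem genSpan_mono {P Q : FreeSemigroup X → Prop} (h : ∀ u, P u → Q u) :
    genSpan S P ≤ genSpan S Q :=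
  Submodule.span_mono fun _ ⟨a, b, s, ws, hs, hws, hP, hq⟩ => ⟨a, b, s, ws, hs, hws, h _ hP, hq⟩

theorem genSpan_lt_le_supported (w : FreeSemigroup X) :
    genSpan S (· < w) ≤ supported K K (Set.Iio w) := by
  refine Submodule.span_le.mpr ?_
  rintro _ ⟨a, b, s, ws, -, hws, hlt, rfl⟩
  exact supported_mono (Set.Iic_subset_Iio.mpr hlt) (hws.wrapPoly a b).mem_supported

theorem wrapPoly_mem_genSpan_lt {w : FreeSemigroup X} {p : FreeNA K X} (a b : List X)
    (hp : p ∈ genSpan S (· < w)) : wrapPoly a b p ∈ genSpan S (· < wrapW a b w) := by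
  rw [wrapPoly_eq_mapDomainLinearMap]
  refine Submodule.map_le_iff_le_comap.mpr ?_ (Submodule.mem_map_of_mem hp)
  refine Submodule.span_le.mpr ?_
  rintro _ ⟨a', b', s, ws, hs, hws, hlt, rfl⟩
  rw [SetLike.mem_coe, Submodule.mem_comap, ← wrapPoly_eq_mapDomainLinearMap, wrapPoly_wrapPoly]
  exact wrapPoly_mem_genSpan hs hws (wrapW_wrapW a b a' b' ws ▸ wrapW_strictMono a b hlt)

end GenSpan

section CDTwoToGSB

variable [WellFoundedLT X] {S : Set (FreeNA K X)}

theorem idS_inf_supported_le_genSpan (hmonic : ∀ s ∈ S, ∃ w, MonicAt s w) (h2 : CDTwo S)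
    (w : FreeSemigroup X) : IdS S ⊓ supported K K (Set.Iio w) ≤ genSpan S (· < w) := by
  induction w using WellFoundedLT.induction with
  | _ w ih =>
  rintro f ⟨hfI, hfw⟩
  rcases eq_or_ne f 0 with rfl | hf0
  · exact zero_mem _
  obtain ⟨a, b, s, ws, hs, hws, hlead⟩ := h2 f hfI hf0
  have hu : wrapW a b ws < w := mem_supported.mp hfw hlead.1
  have hmon := (monicAt_of_hasLead hmonic hs hws).wrapPoly a b
  have hrest : f - f.coeff (wrapW a b ws) • wrapPoly a b s ∈ genSpan S (· < wrapW a b ws) :=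
    ih _ hu ⟨sub_mem hfI (Submodule.smul_mem _ _ (wrapPoly_mem_idS a b hs)),
      sub_smul_mem_supported_Iio hlead.mem_supported hmon.1.mem_supported hmon.2⟩
  simpa using add_mem (genSpan_mono (fun v hv => hv.trans hu) hrest)
    (Submodule.smul_mem _ (f.coeff (wrapW a b ws)) (wrapPoly_mem_genSpan hs hws hu))

theorem trivialMod_sub_of_monicAt (hmonic : ∀ s ∈ S, ∃ w, MonicAt s w) (h2 : CDTwo S)
    {f g : FreeNA K X} {w : FreeSemigroup X} (hf : f ∈ IdS S) (hg : g ∈ IdS S)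
    (hfw : MonicAt f w) (hgw : MonicAt g w) : TrivialMod S w (f - g) := by
  refine trivialMod_iff.mpr (idS_inf_supported_le_genSpan hmonic h2 w ⟨sub_mem hf hg, ?_⟩)
  simpa [hfw.2] using
    sub_smul_mem_supported_Iio hfw.1.mem_supported hgw.1.mem_supported hgw.2

theorem isGSB_of_cdTwo (hmonic : ∀ s ∈ S, ∃ w, MonicAt s w) (h2 : CDTwo S) : IsGSB S := by
  refine ⟨hmonic, ?_, ?_⟩
  · intro f hf g hg wf wg a b hwf hwg heq _
    rw [mul_single_one_eq_wrapPoly, single_one_mul_eq_wrapPoly]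
    refine trivialMod_sub_of_monicAt hmonic h2 (wrapPoly_mem_idS _ _ hf)
      (wrapPoly_mem_idS _ _ hg) ?_ ?_
    · rw [← wrapW_nil_left]
      exact (monicAt_of_hasLead hmonic hf hwf).wrapPoly _ _
    · rw [heq, ← wrapW_nil_right]
      exact (monicAt_of_hasLead hmonic hg hwg).wrapPoly _ _
  · intro f hf g hg wf wg a b hwf hwg heq
    refine trivialMod_sub_of_monicAt hmonic h2 (subset_idS hf) (wrapPoly_mem_idS _ _ hg)
      (monicAt_of_hasLead hmonic hf hwf) ?_
    rw [heq]
    exact (monicAt_of_hasLead hmonic hg hwg).wrapPoly _ _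

end CDTwoToGSB

section Compositions

variable {S : Set (FreeNA K X)}

theorem sub_mem_genSpan_of_disjoint {s1 s2 : FreeNA K X} {w1 w2 : FreeSemigroup X}
    (hs1 : s1 ∈ S) (hs2 : s2 ∈ S) (h1 : MonicAt s1 w1) (h2 : MonicAt s2 w2) (a c b : List X) :
    wrapPoly a (c ++ w2.toL ++ b) s1 - wrapPoly (a ++ w1.toL ++ c) b s2 ∈
      genSpan S (· < wrapW a (c ++ w2.toL ++ b) w1) := by
  have hcross (u v : FreeSemigroup X) :
      wrapW a (c ++ v.toL ++ b) u = wrapW (a ++ u.toL ++ c) b v := by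
    rw [wrapW_eq_iff]; simp
  -- `L₁ = B s1 ·` and `L₂ = B · s2` for the bilinear `B p q = a (p c q) b`; the difference is
  -- `B s1 (w2 - s2) + B (s1 - w1) s2`, all of whose terms have words below `a w1 c w2 b`.
  let L₁ : FreeNA K X →ₗ[K] FreeNA K X :=
    mapDomainLinearMap K K (wrapW a b) ∘ₗ LinearMap.mulLeft K (wrapPoly [] c s1)
  let L₂ : FreeNA K X →ₗ[K] FreeNA K X :=
    mapDomainLinearMap K K (wrapW a b) ∘ₗ LinearMap.mulRight K s2 ∘ₗ
      mapDomainLinearMap K K (wrapW [] c)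
  have hL₁ (v : FreeSemigroup X) : L₁ (single v 1) = wrapPoly a (c ++ v.toL ++ b) s1 := by
    simp [L₁, ← wrapPoly_eq_mapDomainLinearMap, mul_single_one_eq_wrapPoly, wrapPoly_wrapPoly]
  have hL₂ (u : FreeSemigroup X) : L₂ (single u 1) = wrapPoly (a ++ u.toL ++ c) b s2 := by
    simp [L₂, ← wrapPoly_eq_mapDomainLinearMap, single_one_mul_eq_wrapPoly, wrapPoly_wrapPoly,
      toL_wrapW]
  have hid : wrapPoly a (c ++ w2.toL ++ b) s1 - wrapPoly (a ++ w1.toL ++ c) b s2 =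
      L₁ (-(s2 - single w2 1)) + L₂ (s1 - single w1 1) := by
    have hmid : L₁ s2 = L₂ s1 := by simp [L₁, L₂, ← wrapPoly_eq_mapDomainLinearMap]
    rw [map_neg, map_sub, map_sub, hL₁, hL₂, hmid]
    abel
  rw [hid]
  refine add_mem (map_mem_of_mem_supported L₁ (fun v hv => ?_)
    (neg_mem h2.sub_single_mem_supported_Iio))
    (map_mem_of_mem_supported L₂ (fun u hu => ?_) h1.sub_single_mem_supported_Iio)
  · rw [hL₁]
    refine wrapPoly_mem_genSpan hs1 h1.1 ?_
    rw [hcross, hcross]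
    exact wrapW_strictMono _ _ hv
  · rw [hL₂]
    refine wrapPoly_mem_genSpan hs2 h2.1 ?_
    rw [← hcross]
    exact wrapW_strictMono _ _ hu

theorem sub_mem_genSpan_of_inclusion (hGSB : IsGSB S) {s1 s2 : FreeNA K X}
    {w1 w2 : FreeSemigroup X} (hs1 : s1 ∈ S) (hs2 : s2 ∈ S) (h1 : HasLead s1 w1)
    (h2 : HasLead s2 w2) {a' b' : List X} (hw : w1 = wrapW a' b' w2) (a b : List X) :
    wrapPoly a b s1 - wrapPoly (a ++ a') (b' ++ b) s2 ∈ genSpan S (· < wrapW a b w1) := by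
  have := wrapPoly_mem_genSpan_lt a b
    (trivialMod_iff.mp (hGSB.2.2 s1 hs1 s2 hs2 w1 w2 a' b' h1 h2 hw))
  rwa [wrapPoly_sub, wrapPoly_wrapPoly] at this

theorem sub_mem_genSpan_of_overlap (hGSB : IsGSB S) {s1 s2 : FreeNA K X}
    {w1 w2 : FreeSemigroup X} (hs1 : s1 ∈ S) (hs2 : s2 ∈ S) (h1 : HasLead s1 w1)
    (h2 : HasLead s2 w2) {A C B : FreeSemigroup X} (hw1 : w1 = A * C) (hw2 : w2 = C * B)
    (a b : List X) :
    wrapPoly a (B.toL ++ b) s1 - wrapPoly (a ++ A.toL) b s2 ∈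
      genSpan S (· < wrapW a (B.toL ++ b) w1) := by
  have hlen : (w1 * B).len < w1.len + w2.len := by
    simp only [hw1, hw2, FreeSemigroup.len_mul]
    linarith [C.len_pos]
  have hcomp := hGSB.2.1 s1 hs1 s2 hs2 w1 w2 B A h1 h2 (by rw [hw1, hw2, mul_assoc]) hlen
  rw [trivialMod_iff, mul_single_one_eq_wrapPoly, single_one_mul_eq_wrapPoly] at hcomp
  have := wrapPoly_mem_genSpan_lt a b hcomp
  rwa [wrapPoly_sub, wrapPoly_wrapPoly, wrapPoly_wrapPoly, ← wrapW_nil_left, wrapW_wrapW,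
    List.append_nil, List.nil_append] at this

theorem sub_mem_genSpan_of_append_eq (hGSB : IsGSB S) {s1 s2 : FreeNA K X}
    {w1 w2 : FreeSemigroup X} (hs1 : s1 ∈ S) (hs2 : s2 ∈ S) (h1 : HasLead s1 w1)
    (h2 : HasLead s2 w2) {a b1 a' b2 : List X} (h : w1.toL ++ b1 = a' ++ (w2.toL ++ b2)) :
    wrapPoly a b1 s1 - wrapPoly (a ++ a') b2 s2 ∈ genSpan S (· < wrapW a b1 w1) := by
  have hm1 := monicAt_of_hasLead hGSB.1 hs1 h1
  have hm2 := monicAt_of_hasLead hGSB.1 hs2 h2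
  rcases List.append_eq_append_iff.mp h with ⟨c, rfl, rfl⟩ | ⟨y, hy, hrest⟩
  · -- `w2` lies to the right of `w1`
    simpa using sub_mem_genSpan_of_disjoint hs1 hs2 hm1 hm2 a c b2
  rcases List.append_eq_append_iff.mp hrest with ⟨z, rfl, rfl⟩ | ⟨z, hz, rfl⟩
  · -- `w2` lies inside `w1`
    have hw1 : w1 = wrapW a' z w2 := by simpa [eq_wrapW_iff] using hy
    exact sub_mem_genSpan_of_inclusion hGSB hs1 hs2 h1 h2 hw1 a b1
  -- `w1 = a' y` and `w2 = y z`: a proper overlap unless one of `y`, `z`, `a'` is empty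
  rcases eq_or_ne y [] with rfl | hy0
  · simp only [List.append_nil, List.nil_append] at hy hz
    subst hy hz
    simpa using sub_mem_genSpan_of_disjoint hs1 hs2 hm1 hm2 a [] b2
  rcases eq_or_ne z [] with rfl | hz0
  · have hw1 : w1 = wrapW a' [] w2 := by simpa [eq_wrapW_iff, hz] using hy
    simpa using sub_mem_genSpan_of_inclusion hGSB hs1 hs2 h1 h2 hw1 a b2
  rcases eq_or_ne a' [] with rfl | ha'0
  · have hw2 : w2 = wrapW [] z w1 := by simpa [eq_wrapW_iff, hy] using hz
    have := neg_mem (sub_mem_genSpan_of_inclusion hGSB hs2 hs1 h2 h1 hw2 a b2)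
    rw [neg_sub, hw2, wrapW_wrapW] at this
    simpa using this
  obtain ⟨A, rfl⟩ := FreeSemigroup.exists_toL_eq ha'0
  obtain ⟨C, rfl⟩ := FreeSemigroup.exists_toL_eq hy0
  obtain ⟨B, rfl⟩ := FreeSemigroup.exists_toL_eq hz0
  exact sub_mem_genSpan_of_overlap hGSB hs1 hs2 h1 h2
    (FreeSemigroup.toL_injective hy) (FreeSemigroup.toL_injective hz) a b2

theorem wrapPoly_sub_wrapPoly_mem_genSpan (hGSB : IsGSB S) {s1 s2 : FreeNA K X}
    {w1 w2 : FreeSemigroup X} (hs1 : s1 ∈ S) (hs2 : s2 ∈ S) (h1 : HasLead s1 w1)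
    (h2 : HasLead s2 w2) {a1 b1 a2 b2 : List X} (heq : wrapW a1 b1 w1 = wrapW a2 b2 w2) :
    wrapPoly a1 b1 s1 - wrapPoly a2 b2 s2 ∈ genSpan S (· < wrapW a1 b1 w1) := by
  have hl := wrapW_eq_iff.mp heq
  simp only [List.append_assoc] at hl
  rcases List.append_eq_append_iff.mp hl with ⟨a', rfl, h⟩ | ⟨a', rfl, h⟩
  · exact sub_mem_genSpan_of_append_eq hGSB hs1 hs2 h1 h2 h
  · have := neg_mem (sub_mem_genSpan_of_append_eq hGSB hs2 hs1 h2 h1 (a := a2) h)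
    rwa [neg_sub, ← heq] at this

theorem exists_sub_smul_mem_genSpan (hGSB : IsGSB S) {a b : List X} {s : FreeNA K X}
    {ws : FreeSemigroup X} (hs : s ∈ S) (hws : HasLead s ws) {f : FreeNA K X}
    (hf : f ∈ genSpan S (· ≤ wrapW a b ws)) :
    ∃ c : K, f - c • wrapPoly a b s ∈ genSpan S (· < wrapW a b ws) := by
  induction hf using Submodule.span_induction with
  | mem q hq =>
    obtain ⟨a', b', s', ws', hs', hws', hle, rfl⟩ := hq
    rcases hle.lt_or_eq with hlt | heq
    · exact ⟨0, by simpa using wrapPoly_mem_genSpan hs' hws' hlt⟩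
    · refine ⟨1, ?_⟩
      rw [one_smul, ← heq]
      exact wrapPoly_sub_wrapPoly_mem_genSpan hGSB hs' hs hws' hws heq
  | zero => exact ⟨0, by simp⟩
  | add x y _ _ hx hy =>
    obtain ⟨c, hc⟩ := hx
    obtain ⟨d, hd⟩ := hy
    refine ⟨c + d, ?_⟩
    convert add_mem hc hd using 1
    rw [add_smul]
    abel
  | smul k x _ hx =>
    obtain ⟨c, hc⟩ := hx
    refine ⟨k * c, ?_⟩
    convert Submodule.smul_mem _ k hc using 1
    rw [smul_sub, mul_smul]

theorem mem_genSpan_lt_or_hasLead (hGSB : IsGSB S) {w : FreeSemigroup X} {f : FreeNA K X}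
    (hf : f ∈ genSpan S (· ≤ w)) : f ∈ genSpan S (· < w) ∨
      ∃ a b s ws, s ∈ S ∧ HasLead s ws ∧ HasLead f (wrapW a b ws) := by
  by_cases hw : ∃ a b s ws, s ∈ S ∧ HasLead s ws ∧ wrapW a b ws = w
  · obtain ⟨a, b, s, ws, hs, hws, rfl⟩ := hw
    obtain ⟨c, hc⟩ := exists_sub_smul_mem_genSpan hGSB hs hws hf
    rcases eq_or_ne c 0 with rfl | hc0
    · exact .inl (by simpa using hc)
    · refine .inr ⟨a, b, s, ws, hs, hws, ?_⟩
      simpa using (((monicAt_of_hasLead hGSB.1 hs hws).wrapPoly a b).hasLead_smul hc0).add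
        (genSpan_lt_le_supported _ hc)
  · refine .inl (Submodule.span_mono ?_ hf)
    rintro _ ⟨a, b, s, ws, hs, hws, hle, rfl⟩
    exact ⟨a, b, s, ws, hs, hws, hle.lt_of_ne fun h => hw ⟨a, b, s, ws, hs, hws, h⟩, rfl⟩

theorem exists_mem_genSpan_le {P : FreeSemigroup X → Prop} {f : FreeNA K X}
    (hf : f ∈ genSpan S P) (hf0 : f ≠ 0) : ∃ w, P w ∧ f ∈ genSpan S (· ≤ w) := by
  obtain ⟨_, ⟨a, b, s, ws, hs, hws, hP, rfl⟩, hm⟩ :=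
    Submodule.exists_mem_span_le_of_mem_span (fun q : FreeNA K X => q.coeff.support.max) hf hf0
  refine ⟨wrapW a b ws, hP, Submodule.span_mono ?_ hm⟩
  rintro _ ⟨⟨a', b', s', ws', hs', hws', -, rfl⟩, hle⟩
  refine ⟨a', b', s', ws', hs', hws', ?_, rfl⟩
  simpa [(hws'.wrapPoly a' b').max_eq, (hws.wrapPoly a b).max_eq] using hle

theorem idS_le_genSpan (hmonic : ∀ s ∈ S, ∃ w, MonicAt s w) :
    IdS S ≤ genSpan S fun _ => True := by
  refine Submodule.span_le.mpr ?_
  rintro _ ⟨a, b, s, hs, rfl⟩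
  obtain ⟨ws, hws⟩ := hmonic s hs
  exact wrapPoly_mem_genSpan hs hws.1 trivial

theorem cdTwo_of_isGSB [WellFoundedLT X] (hGSB : IsGSB S) : CDTwo S := by
  have key (w : FreeSemigroup X) : ∀ f ∈ genSpan S (· ≤ w), f ≠ 0 →
      ∃ a b s ws, s ∈ S ∧ HasLead s ws ∧ HasLead f (wrapW a b ws) := by
    induction w using WellFoundedLT.induction with
    | _ w ih =>
    intro f hf hf0
    refine (mem_genSpan_lt_or_hasLead hGSB hf).elim (fun hlt => ?_) id
    obtain ⟨w', hw', hf'⟩ := exists_mem_genSpan_le hlt hf0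
    exact ih w' hw' f hf' hf0
  intro f hf hf0
  obtain ⟨w, -, hw⟩ := exists_mem_genSpan_le (idS_le_genSpan hGSB.1 hf) hf0
  exact key w f hw hf0

end Compositions

section Irreducible

variable {S : Set (FreeNA K X)}

theorem supported_Iio_le_idS_sup {v : FreeSemigroup X}
    (h : ∀ u < v, single u (1 : K) ∈ IdS S ⊔ supported K K (IrrSet S ∩ Set.Iic u)) :
    supported K K (Set.Iio v) ≤ IdS S ⊔ supported K K (IrrSet S ∩ Set.Iio v) := by
  rw [supported_eq_span_single, Submodule.span_le]
  rintro _ ⟨u, hu, rfl⟩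
  exact sup_le_sup_left (supported_mono (Set.inter_subset_inter_right _
    (Set.Iic_subset_Iio.mpr hu))) (IdS S) (h u hu)

theorem disjoint_supported_irrSet_of_cdTwo (h2 : CDTwo S) :
    Disjoint (supported K K (IrrSet S)) (IdS S) := by
  rw [Submodule.disjoint_def]
  intro f hirr hI
  by_contra hf0
  obtain ⟨a, b, s, ws, hs, hws, hlead⟩ := h2 f hI hf0
  exact mem_supported.mp hirr hlead.1 ⟨a, b, s, ws, hs, hws, rfl⟩

section WellFounded

variable [WellFoundedLT X]

theorem single_mem_idS_sup_supported (hmonic : ∀ s ∈ S, ∃ w, MonicAt s w)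
    (v : FreeSemigroup X) :
    single v (1 : K) ∈ IdS S ⊔ supported K K (IrrSet S ∩ Set.Iic v) := by
  induction v using WellFoundedLT.induction with
  | _ v ih =>
  by_cases hv : v ∈ IrrSet S
  · exact Submodule.mem_sup_right (single_mem_supported 1 ⟨hv, Set.mem_Iic.mpr le_rfl⟩)
  obtain ⟨a, b, s, ws, hs, hws, rfl⟩ := not_not.mp hv
  have hlow :=
    neg_mem ((monicAt_of_hasLead hmonic hs hws).wrapPoly a b).sub_single_mem_supported_Iio
  have := add_mem (supported_Iio_le_idS_sup ih hlow)
    (Submodule.mem_sup_left (wrapPoly_mem_idS a b hs))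
  simpa using sup_le_sup_left (supported_mono
    (Set.inter_subset_inter_right _ Set.Iio_subset_Iic_self)) (IdS S) this

theorem idS_sup_supported_irrSet_eq_top (hmonic : ∀ s ∈ S, ∃ w, MonicAt s w) :
    IdS S ⊔ supported K K (IrrSet S) = ⊤ := by
  rw [eq_top_iff, ← (MonoidAlgebra.basis (FreeSemigroup X) K).span_eq, Submodule.span_le]
  rintro _ ⟨v, rfl⟩
  rw [basis_apply]
  exact sup_le_sup_left (supported_mono Set.inter_subset_left) (IdS S)
    (single_mem_idS_sup_supported hmonic v)

theorem cdTwo_of_disjoint_supported_irrSet (hmonic : ∀ s ∈ S, ∃ w, MonicAt s w)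
    (hdisj : Disjoint (supported K K (IrrSet S)) (IdS S)) : CDTwo S := by
  intro f hI hf0
  obtain ⟨w, hw⟩ := exists_hasLead hf0
  by_contra hirr
  have hwirr : w ∈ IrrSet S := fun ⟨a, b, s, ws, hs, hws, he⟩ =>
    hirr ⟨a, b, s, ws, hs, hws, he ▸ hw⟩
  have hlow : f - f.coeff w • single w 1 ∈ supported K K (Set.Iio w) :=
    sub_smul_mem_supported_Iio hw.mem_supported (single_mem_supported 1 (Set.mem_Iic.mpr le_rfl))
      (by simp [coeff_single])
  obtain ⟨i, hi, g, hg, hig⟩ := Submodule.mem_sup.mp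
    (supported_Iio_le_idS_sup (fun u _ => single_mem_idS_sup_supported hmonic u) hlow)
  have hgw : g.coeff w = 0 := mem_supported'.mp hg w fun h => lt_irrefl w h.2
  have hr : f.coeff w • single w 1 + g = f - i := by rw [← sub_eq_of_eq_add' hig.symm]; abel
  have hr0 : f.coeff w • single w 1 + g = 0 := by
    refine Submodule.disjoint_def.mp hdisj _ ?_ (hr ▸ sub_mem hI hi)
    exact add_mem (Submodule.smul_mem _ _ (single_mem_supported 1 hwirr))
      (supported_mono Set.inter_subset_left hg)
  refine Finsupp.mem_support_iff.mp hw.1 ?_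
  simpa [coeff_single, hgw] using congrArg (fun p : FreeNA K X => p.coeff w) hr0

theorem cdTwo_iff_cdThree (hmonic : ∀ s ∈ S, ∃ w, MonicAt s w) : CDTwo S ↔ CDThree S := by
  rw [CDThree, linearIndependent_mk_single_iff, span_range_mk_single_eq_top_iff]
  exact ⟨fun h2 => ⟨disjoint_supported_irrSet_of_cdTwo h2, idS_sup_supported_irrSet_eq_top hmonic⟩,
    fun h3 => cdTwo_of_disjoint_supported_irrSet hmonic h3.1⟩

end WellFounded

end Irreducible

end Polynomials

/-- **Composition–Diamond lemma for associative algebras** (the case `Ω = ∅`; Shirshov,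
Bokut, Bergman).  Let `K` be a commutative ring with unit, `X` a well-ordered set, and
order `S(X)` by the deg-lex ordering.  For a set `S` of monic polynomials of `K⟨X⟩`
the following are equivalent: (I) `S` is a Gröbner–Shirshov basis; (II) the leading
word of every nonzero element of `Id(S)` contains some `s̄`, `s ∈ S`, as a subword;
(III) `Irr(S)` is a `K`-basis of `K⟨X⟩/Id(S)`. -/
theorem composition_diamond_assoc [WellFoundedLT X]
    (S : Set (FreeNA K X)) (hmonic : ∀ s ∈ S, ∃ w, MonicAt s w) :
    (IsGSB S ↔ CDTwo S) ∧ (IsGSB S ↔ CDThree S) := by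
  have h12 : IsGSB S ↔ CDTwo S := ⟨cdTwo_of_isGSB, isGSB_of_cdTwo hmonic⟩
  exact ⟨h12, h12.trans (cdTwo_iff_cdThree hmonic)⟩

end Algebra
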